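/- Let x be any word of the form g_r g_r^*, g_r^* g_r (for some r∈[s]), or g_r^{d_r}, (g_r^*)^{d_r} (for some r∈[s] with d_r < ∞). Then the word-graph Γ_x has exactly one strong congruence π with χ(Γ_x/π) = 1. -/

import Mathlib

noncomputable section

open Filter Topology

/-- A finite, directed, edge-colored graph with colors in `Fin s`,
with vertices living in an ambient type `V`. -/
structure CGraph (V : Type) (s : ℕ) where
  verts : Set V
  finite : verts.Finite
  nonem : verts.Nonempty
  E : Fin s → V → V → Prop
  memL : ∀ r a b, E r a b → a ∈ verts
  memR : ∀ r a b, E r a b → b ∈ verts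

namespace CGraph

variable {V W : Type} {s : ℕ}

/-- A graph is trivial iff it has no edges (of any color). -/
def Trivial (Γ : CGraph V s) : Prop := ∀ r a b, ¬ Γ.E r a b

/-- Two vertices are adjacent iff there is an edge (of any color, either direction)
between them. -/
def Adj (Γ : CGraph V s) (a b : V) : Prop := ∃ r, Γ.E r a b ∨ Γ.E r b a

/-- A graph is connected iff any two of its vertices are joined by a finite chain of
edges (of any colors and either direction). -/
def Connected (Γ : CGraph V s) : Prop :=
  ∀ a ∈ Γ.verts, ∀ b ∈ Γ.verts, Relation.ReflTransGen Γ.Adj a b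

/-- `Γ'` is a subgraph of `Γ`. -/
def Subgraph (Γ' Γ : CGraph V s) : Prop :=
  Γ'.verts ⊆ Γ.verts ∧ ∀ r a b, Γ'.E r a b → Γ.E r a b

/-- `C` is a connected component of `Γ`: a maximal connected subgraph. -/
def IsComponent (C Γ : CGraph V s) : Prop :=
  C.Subgraph Γ ∧ C.Connected ∧
    ∀ C' : CGraph V s, C'.Subgraph Γ → C'.Connected → C.Subgraph C' → C'.Subgraph C

/-- A graph is admissible iff no two distinct edges of the same color begin at the
same vertex or end at the same vertex. -/
def Admissible (Γ : CGraph V s) : Prop :=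
  (∀ r a b b', Γ.E r a b → Γ.E r a b' → b = b') ∧
    (∀ r a a' b, Γ.E r a b → Γ.E r a' b → a = a')

/-- `Γ.mono r` is `Γ` with all edges not of color `r` removed. -/
def mono (Γ : CGraph V s) (r : Fin s) : CGraph V s where
  verts := Γ.verts
  finite := Γ.finite
  nonem := Γ.nonem
  E := fun r' a b => r' = r ∧ Γ.E r' a b
  memL := fun r' a b h => Γ.memL r' a b h.2
  memR := fun r' a b h => Γ.memR r' a b h.2

/-- An `r`-path of `Γ` is a non-trivial connected component of `Γ.mono r`. -/
def IsRPath (P Γ : CGraph V s) (r : Fin s) : Prop :=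
  P.IsComponent (Γ.mono r) ∧ ¬ P.Trivial

/-- A path of `Γ` is an `r`-path for some color `r`. -/
def IsPathOf (P Γ : CGraph V s) : Prop := ∃ r, P.IsRPath Γ r

/-- A path is closed (a closed circuit) iff every one of its vertices has an
outgoing edge. -/
def Closed (P : CGraph V s) : Prop := ∀ a ∈ P.verts, ∃ r b, P.E r a b

/-- A loop of `Γ` is a path of `Γ` which is a closed circuit. -/
def IsLoopOf (P Γ : CGraph V s) : Prop := P.IsPathOf Γ ∧ P.Closed

/-- A string of `Γ` is a path of `Γ` which is not a loop. -/
def IsStringOf (P Γ : CGraph V s) : Prop := P.IsPathOf Γ ∧ ¬ P.Closed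

/-- The number of edges of `Γ` (counting colors). -/
def edgeCount (Γ : CGraph V s) : ℕ :=
  Nat.card {p : Fin s × V × V // Γ.E p.1 p.2.1 p.2.2}

/-- The number of loops (of any color) of `Γ`. -/
def loopCount (Γ : CGraph V s) : ℕ :=
  Nat.card {P : CGraph V s // P.IsLoopOf Γ}

/-- The number of vertices of `Γ`. -/
def vertCount (Γ : CGraph V s) : ℕ := Nat.card Γ.verts

/-- The loop-characteristic `χ(Γ) = V(Γ) - E(Γ) + L(Γ)`. -/
def chi (Γ : CGraph V s) : ℤ :=
  (Γ.vertCount : ℤ) - (Γ.edgeCount : ℤ) + (Γ.loopCount : ℤ)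

/-- `Γ.erase P` is the graph obtained from `Γ` by removing all edges of `P`. -/
def erase (Γ P : CGraph V s) : CGraph V s where
  verts := Γ.verts
  finite := Γ.finite
  nonem := Γ.nonem
  E := fun r a b => Γ.E r a b ∧ ¬ P.E r a b
  memL := fun r a b h => Γ.memL r a b h.1
  memR := fun r a b h => Γ.memR r a b h.1

/-- A graph is strongly admissible (w.r.t. `d : Fin s → ℕ∞`) iff it is admissible,
every `r`-loop has length `d r`, and every `r`-string has length `< d r`. -/
def StronglyAdmissible (d : Fin s → ℕ∞) (Γ : CGraph V s) : Prop :=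
  Γ.Admissible ∧ ∀ r P, IsRPath P Γ r →
    (P.Closed → (P.edgeCount : ℕ∞) = d r) ∧ (¬ P.Closed → (P.edgeCount : ℕ∞) < d r)

/-- The quotient of `Γ` by a partition (setoid) `π` of the ambient vertex type. -/
def quot (Γ : CGraph V s) (π : Setoid V) : CGraph (Quotient π) s where
  verts := Quotient.mk π '' Γ.verts
  finite := Γ.finite.image _
  nonem := Γ.nonem.image _
  E := fun r A B => ∃ a b, Γ.E r a b ∧ Quotient.mk π a = A ∧ Quotient.mk π b = B
  memL := fun r A B h => by
    obtain ⟨a, b, he, ha, hb⟩ := h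
    exact ⟨a, Γ.memL r a b he, ha⟩
  memR := fun r A B h => by
    obtain ⟨a, b, he, ha, hb⟩ := h
    exact ⟨b, Γ.memR r a b he, hb⟩

/-- `π` is a congruence of `Γ`: for any two edges of the same color, the source
blocks agree iff the target blocks agree. -/
def IsCongruence (Γ : CGraph V s) (π : Setoid V) : Prop :=
  ∀ r a₁ b₁ a₂ b₂, Γ.E r a₁ b₁ → Γ.E r a₂ b₂ → (π.r a₁ a₂ ↔ π.r b₁ b₂)

/-- `π` is a strong congruence of `Γ`: a congruence whose quotient is strongly
admissible. -/
def IsStrongCongruence (d : Fin s → ℕ∞) (Γ : CGraph V s) (π : Setoid V) : Prop :=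
  Γ.IsCongruence π ∧ (Γ.quot π).StronglyAdmissible d

/-- Isomorphism of edge-colored graphs: a bijection between the vertex sets
preserving the `r`-edges in both directions, for every color `r`. -/
def Iso (Γ₁ : CGraph V s) (Γ₂ : CGraph W s) : Prop :=
  ∃ Φ : V → W, Set.BijOn Φ Γ₁.verts Γ₂.verts ∧
    ∀ r a b, a ∈ Γ₁.verts → b ∈ Γ₁.verts → (Γ₂.E r (Φ a) (Φ b) ↔ Γ₁.E r a b)

end CGraph

/-- The next vertex (cyclically) in `Fin n`. -/
def nxt {n : ℕ} (k : Fin n) : Fin n := ⟨(k.1 + 1) % n, Nat.mod_lt _ k.pos⟩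

/-- The word-graph of a non-empty word `w` in the letters `g_r` (encoded `(r, true)`)
and `g_r^*` (encoded `(r, false)`): vertex set `{1,…,n}` (as `Fin w.length`), and for
each position `k` one edge of color `r_k`, going `k ← k+1` for `g_r` and `k → k+1`
for `g_r^*` (cyclically). -/
def wordGraph {s : ℕ} (w : List (Fin s × Bool)) (hw : w ≠ []) :
    CGraph (Fin w.length) s where
  verts := Set.univ
  finite := Set.finite_univ
  nonem := ⟨⟨0, List.length_pos_iff.mpr hw⟩, Set.mem_univ _⟩
  E := fun r a b => ∃ k : Fin w.length,
    (w.get k = (r, true) ∧ a = nxt k ∧ b = k) ∨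
    (w.get k = (r, false) ∧ a = k ∧ b = nxt k)
  memL := fun _ _ _ _ => Set.mem_univ _
  memR := fun _ _ _ _ => Set.mem_univ _

/-- `x` is one of the words `g_r g_r^*`, `g_r^* g_r` (any `r`), or `g_r^{d_r}`,
`(g_r^*)^{d_r}` (any `r` with `d r < ∞`). -/
def IsSpecialWord (s : ℕ) (d : Fin s → ℕ∞) (x : List (Fin s × Bool)) : Prop :=
  ∃ r : Fin s,
    x = [(r, true), (r, false)] ∨ x = [(r, false), (r, true)] ∨
      ∃ m : ℕ, d r = (m : ℕ∞) ∧
        (x = List.replicate m (r, true) ∨ x = List.replicate m (r, false))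

/-- The number of strong congruences `π` of `Γ` with `χ(Γ/π) = 1`. -/
def sconCount {s : ℕ} (d : Fin s → ℕ∞) {V : Type} (Γ : CGraph V s) : ℕ :=
  Nat.card {π : Setoid V // Γ.IsStrongCongruence d π ∧ (Γ.quot π).chi = 1}

/-!
All four special words give a connected graph whose edges all have colour `r`, so the graph
and each of its quotients is a single `r`-path, and `χ = V - E + [the path is closed]`.

For `g_r^{d_r}` (and its dual) the graph is a cycle of length `d_r`. A strong congruence must
keep all `d_r` edges of the closed quotient, while an admissible monochromatic graph has at
most as many edges as vertices; so the quotient has `d_r` vertices and `π` is discrete, and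
the discrete partition does work.

For `g_r g_r^*` (and its dual) both letters give the same edge, a string of length one on two
vertices. The discrete partition keeps it (strong iff `1 < d_r`), the indiscrete one makes it
a loop of length one (strong iff `d_r = 1`); both have `χ = 1`, and since `1 ≤ d_r` exactly
one of them is strong.
-/

lemma Setoid.eq_bot_of_card_le {α : Type*} [Finite α] {π : Setoid α}
    (h : Nat.card α ≤ Nat.card (Quotient π)) : π = ⊥ := by
  have hinj := (Quotient.mk_surjective.bijective_of_nat_card_le h).injective
  ext a b
  exact ⟨fun hab => hinj (Quotient.sound hab), fun hab => hab ▸ π.refl a⟩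

lemma Setoid.eq_bot_or_eq_top_of_forall_eq_or_eq {α : Type*} {v₀ v₁ : α}
    (hall : ∀ c, c = v₀ ∨ c = v₁) (π : Setoid α) : π = ⊥ ∨ π = ⊤ := by
  by_cases h : π v₀ v₁
  · refine .inr (Setoid.eq_top_iff.2 fun a b => ?_)
    rcases hall a with rfl | rfl <;> rcases hall b with rfl | rfl
    exacts [π.refl _, h, π.symm h, π.refl _]
  · refine .inl (Setoid.ext fun a b => ⟨fun hab => ?_, fun hab => hab ▸ π.refl a⟩)
    rcases hall a with rfl | rfl <;> rcases hall b with rfl | rfl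
    exacts [rfl, absurd hab h, absurd (π.symm hab) h, rfl]

namespace CGraph

variable {V : Type} {s : ℕ} {d : Fin s → ℕ∞} {Γ P : CGraph V s} {r : Fin s}

lemma ext {Γ₁ Γ₂ : CGraph V s} (hv : Γ₁.verts = Γ₂.verts) (hE : Γ₁.E = Γ₂.E) : Γ₁ = Γ₂ := by
  cases Γ₁; cases Γ₂; subst hv hE; rfl

lemma Subgraph.refl (Γ : CGraph V s) : Γ.Subgraph Γ :=
  ⟨subset_rfl, fun _ _ _ h => h⟩

lemma Closed.quot (h : Γ.Closed) (π : Setoid V) : (Γ.quot π).Closed := by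
  rintro _ ⟨a, ha, rfl⟩
  obtain ⟨r', b, hab⟩ := h a ha
  exact ⟨r', _, a, b, hab, rfl, rfl⟩

lemma vertCount_quot_of_verts_eq_univ (hverts : Γ.verts = Set.univ) (π : Setoid V) :
    (Γ.quot π).vertCount = Nat.card (Quotient π) := by
  change Nat.card (Quotient.mk π '' Γ.verts) = _
  rw [hverts, Set.image_univ_of_surjective Quotient.mk_surjective, Nat.card_univ]

/-- Such a graph is its own unique path, so its loops, its strong admissibility and `χ`
are read off its global counts. -/
structure IsMonoConnected (Γ : CGraph V s) (r : Fin s) : Prop where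
  color_eq : ∀ r' a b, Γ.E r' a b → r' = r
  connected : Γ.Connected
  exists_edge : ∃ a b, Γ.E r a b

namespace IsMonoConnected

lemma mono_connected (h : Γ.IsMonoConnected r) : (Γ.mono r).Connected := by
  have hadj : (Γ.mono r).Adj = Γ.Adj := by
    ext a b
    refine exists_congr fun r' => or_congr ?_ ?_ <;>
      exact ⟨And.right, fun hE => ⟨h.color_eq _ _ _ hE, hE⟩⟩
  rw [Connected, hadj]
  exact h.connected

lemma isRPath_mono (h : Γ.IsMonoConnected r) : (Γ.mono r).IsRPath Γ r := by
  refine ⟨⟨Subgraph.refl _, h.mono_connected, fun _ hC' _ _ => hC'⟩, fun htriv => ?_⟩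
  obtain ⟨a, b, hab⟩ := h.exists_edge
  exact htriv r a b ⟨rfl, hab⟩

lemma isRPath_iff (h : Γ.IsMonoConnected r) {r' : Fin s} :
    P.IsRPath Γ r' ↔ r' = r ∧ P = Γ.mono r := by
  refine ⟨fun ⟨⟨hsub, hconn, hmax⟩, hnt⟩ => ?_, fun ⟨hr, hP⟩ => hr ▸ hP ▸ h.isRPath_mono⟩
  obtain ⟨r'', a, b, hab⟩ : ∃ r'' a b, P.E r'' a b := by
    simpa [Trivial] using hnt
  obtain ⟨rfl, hab⟩ := hsub.2 _ _ _ hab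
  obtain rfl := h.color_eq _ _ _ hab
  have hsup := hmax (Γ.mono r'') (Subgraph.refl _) h.mono_connected hsub
  exact ⟨rfl, ext (hsub.1.antisymm hsup.1)
    (funext₃ fun _ _ _ => propext ⟨hsub.2 _ _ _, hsup.2 _ _ _⟩)⟩

lemma closed_mono_iff (h : Γ.IsMonoConnected r) : (Γ.mono r).Closed ↔ Γ.Closed :=
  forall₂_congr fun _ _ => exists_congr fun _ => exists_congr fun _ =>
    ⟨And.right, fun hE => ⟨h.color_eq _ _ _ hE, hE⟩⟩

lemma edgeCount_mono (h : Γ.IsMonoConnected r) : (Γ.mono r).edgeCount = Γ.edgeCount :=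
  Nat.card_congr <| Equiv.subtypeEquivRight fun _ =>
    ⟨And.right, fun hE => ⟨h.color_eq _ _ _ hE, hE⟩⟩

open Classical in
lemma loopCount_eq (h : Γ.IsMonoConnected r) :
    Γ.loopCount = if Γ.Closed then 1 else 0 := by
  have hloop : ∀ P : CGraph V s, P.IsLoopOf Γ ↔ P = Γ.mono r ∧ Γ.Closed := by
    intro P
    simp only [IsLoopOf, IsPathOf, h.isRPath_iff, exists_eq_left]
    exact ⟨fun ⟨hP, hc⟩ => ⟨hP, h.closed_mono_iff.1 (hP ▸ hc)⟩,
      fun ⟨hP, hc⟩ => ⟨hP, hP ▸ h.closed_mono_iff.2 hc⟩⟩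
  simp only [loopCount, hloop]
  split_ifs with hc <;> simp [hc]

open Classical in
lemma chi_eq (h : Γ.IsMonoConnected r) :
    Γ.chi = Γ.vertCount - Γ.edgeCount + if Γ.Closed then 1 else 0 := by
  rw [chi, h.loopCount_eq]
  split_ifs <;> simp

lemma stronglyAdmissible_iff (h : Γ.IsMonoConnected r) :
    Γ.StronglyAdmissible d ↔ Γ.Admissible ∧
      (Γ.Closed → (Γ.edgeCount : ℕ∞) = d r) ∧ (¬Γ.Closed → (Γ.edgeCount : ℕ∞) < d r) := by
  refine and_congr_right fun _ => ⟨fun hP => ?_, fun hP r' P hrP => ?_⟩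
  · simpa only [h.closed_mono_iff, h.edgeCount_mono] using hP r _ h.isRPath_mono
  · obtain ⟨rfl, rfl⟩ := h.isRPath_iff.1 hrP
    simpa only [h.closed_mono_iff, h.edgeCount_mono] using hP

lemma quot (h : Γ.IsMonoConnected r) (π : Setoid V) : (Γ.quot π).IsMonoConnected r where
  color_eq := by
    rintro r' _ _ ⟨a, b, hab, -, -⟩
    exact h.color_eq _ _ _ hab
  connected := by
    rintro _ ⟨a, ha, rfl⟩ _ ⟨b, hb, rfl⟩
    refine Relation.ReflTransGen.lift _ ?_ _ _ (h.connected a ha b hb)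
    rintro x y ⟨r', hxy | hyx⟩
    exacts [⟨r', .inl ⟨x, y, hxy, rfl, rfl⟩⟩, ⟨r', .inr ⟨y, x, hyx, rfl, rfl⟩⟩]
  exists_edge := by
    obtain ⟨a, b, hab⟩ := h.exists_edge
    exact ⟨_, _, a, b, hab, rfl, rfl⟩

-- In an admissible monochromatic graph an edge is determined by its source.
lemma edgeCount_le_vertCount (h : Γ.IsMonoConnected r) (hadm : Γ.Admissible) :
    Γ.edgeCount ≤ Γ.vertCount := by
  have : Finite Γ.verts := Γ.finite.to_subtype
  refine Nat.card_le_card_of_injective (fun p => ⟨p.1.2.1, Γ.memL _ _ _ p.2⟩) ?_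
  rintro ⟨⟨r₁, a, b₁⟩, h₁⟩ ⟨⟨r₂, a', b₂⟩, h₂⟩ heq
  obtain rfl : a = a' := congrArg Subtype.val heq
  dsimp only at h₁ h₂
  obtain rfl := h.color_eq _ _ _ h₁
  obtain rfl := h.color_eq _ _ _ h₂
  obtain rfl := hadm.1 _ _ _ _ h₁ h₂
  rfl

end IsMonoConnected

lemma quot_bot_E_mk {a b : V} : (Γ.quot ⊥).E r ⟦a⟧ ⟦b⟧ ↔ Γ.E r a b := by
  refine ⟨fun ⟨a', b', hab, ha, hb⟩ => ?_, fun hab => ⟨a, b, hab, rfl, rfl⟩⟩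
  obtain rfl : a' = a := Quotient.exact ha
  obtain rfl : b' = b := Quotient.exact hb
  exact hab

lemma vertCount_quot_bot : (Γ.quot ⊥).vertCount = Γ.vertCount :=
  Nat.card_image_of_injective (fun _ _ hab => Quotient.exact hab) _

lemma edgeCount_quot_bot : (Γ.quot ⊥).edgeCount = Γ.edgeCount := by
  let e : V ≃ Quotient (⊥ : Setoid V) := Setoid.quotientBotEquiv.symm
  exact Nat.card_congr (Equiv.subtypeEquiv ((Equiv.refl _).prodCongr (e.prodCongr e))
    fun _ => quot_bot_E_mk.symm).symm

lemma closed_quot_bot_iff : (Γ.quot ⊥).Closed ↔ Γ.Closed := by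
  refine ⟨fun h a ha => ?_, fun h => h.quot ⊥⟩
  obtain ⟨r', B, hB⟩ := h ⟦a⟧ ⟨a, ha, rfl⟩
  induction B using Quotient.ind
  exact ⟨r', _, quot_bot_E_mk.1 hB⟩

lemma admissible_quot_bot_iff : (Γ.quot ⊥).Admissible ↔ Γ.Admissible := by
  simp [Admissible, Quotient.forall, quot_bot_E_mk, Quotient.eq]

lemma isCongruence_bot_iff : Γ.IsCongruence ⊥ ↔ Γ.Admissible := by
  refine ⟨fun h => ⟨fun r a b b' hab hab' => (h r a b a b' hab hab').1 rfl,
    fun r a a' b hab ha'b => (h r a b a' b hab ha'b).2 rfl⟩, fun hadm r a₁ b₁ a₂ b₂ h₁ h₂ => ?_⟩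
  constructor
  · rintro rfl
    exact hadm.1 _ _ _ _ h₁ h₂
  · rintro rfl
    exact hadm.2 _ _ _ _ h₁ h₂

lemma IsMonoConnected.isStrongCongruence_bot_iff (h : Γ.IsMonoConnected r) :
    Γ.IsStrongCongruence d ⊥ ↔ Γ.StronglyAdmissible d := by
  rw [IsStrongCongruence, isCongruence_bot_iff, (h.quot ⊥).stronglyAdmissible_iff,
    h.stronglyAdmissible_iff, admissible_quot_bot_iff, closed_quot_bot_iff, edgeCount_quot_bot]
  exact ⟨And.right, fun hsa => ⟨hsa.1, hsa⟩⟩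

open Classical in
lemma IsMonoConnected.chi_quot_bot (h : Γ.IsMonoConnected r) : (Γ.quot ⊥).chi = Γ.chi := by
  rw [(h.quot ⊥).chi_eq, h.chi_eq, vertCount_quot_bot, edgeCount_quot_bot,
    if_congr closed_quot_bot_iff rfl rfl]

lemma isCongruence_top : Γ.IsCongruence ⊤ :=
  fun _ _ _ _ _ _ _ => iff_of_true trivial trivial

instance : Subsingleton (Quotient (⊤ : Setoid V)) :=
  Quotient.subsingleton_iff.2 rfl

lemma quot_top_E {A B : Quotient (⊤ : Setoid V)} : (Γ.quot ⊤).E r A B ↔ ∃ a b, Γ.E r a b :=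
  ⟨fun ⟨a, b, hab, _⟩ => ⟨a, b, hab⟩,
    fun ⟨a, b, hab⟩ => ⟨a, b, hab, Subsingleton.elim _ _, Subsingleton.elim _ _⟩⟩

lemma admissible_quot_top : (Γ.quot ⊤).Admissible :=
  ⟨fun _ _ _ _ _ _ => Subsingleton.elim _ _, fun _ _ _ _ _ _ => Subsingleton.elim _ _⟩

lemma vertCount_quot_top : (Γ.quot ⊤).vertCount = 1 :=
  have : Nonempty (Γ.quot ⊤).verts := (Γ.quot ⊤).nonem.to_subtype
  Nat.card_unique

lemma edgeCount_eq_one {u v : V} (hE : ∀ r' a b, Γ.E r' a b ↔ r' = r ∧ a = u ∧ b = v) :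
    Γ.edgeCount = 1 := by
  rw [edgeCount, Nat.card_congr (Equiv.subtypeEquivRight fun p => (hE _ _ _).trans
    (by simp only [Prod.ext_iff] : _ ↔ p = (r, u, v)))]
  exact Nat.card_unique

def IsChiOneStrongCongruence (d : Fin s → ℕ∞) (Γ : CGraph V s) (π : Setoid V) : Prop :=
  Γ.IsStrongCongruence d π ∧ (Γ.quot π).chi = 1

lemma sconCount_eq_one_of_forall_iff (π₀ : Setoid V)
    (h : ∀ π, Γ.IsChiOneStrongCongruence d π ↔ π = π₀) : sconCount d Γ = 1 := by
  change Nat.card {π // Γ.IsChiOneStrongCongruence d π} = 1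
  rw [Nat.card_congr (Equiv.subtypeEquivRight h)]
  exact Nat.card_unique

theorem sconCount_eq_one_of_cycle [Finite V] (hverts : Γ.verts = Set.univ)
    (hconn : Γ.Connected) (σ : Equiv.Perm V) (hE : ∀ r' a b, Γ.E r' a b ↔ r' = r ∧ a = σ b)
    (hd : d r = Nat.card V) : sconCount d Γ = 1 := by
  obtain ⟨v, -⟩ := Γ.nonem
  have hmc : Γ.IsMonoConnected r :=
    ⟨fun r' a b hab => ((hE r' a b).1 hab).1, hconn, ⟨σ v, v, (hE _ _ _).2 ⟨rfl, rfl⟩⟩⟩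
  have hclosed : Γ.Closed := fun a _ =>
    ⟨r, σ.symm a, (hE _ _ _).2 ⟨rfl, (σ.apply_symm_apply a).symm⟩⟩
  refine sconCount_eq_one_of_forall_iff ⊥ fun π => ⟨fun ⟨⟨_, hsa⟩, _⟩ => ?_, ?_⟩
  · -- the closed quotient must keep all `d r = |V|` edges on at most `|V/π|` vertices
    obtain ⟨hadm, hlen, -⟩ := (hmc.quot π).stronglyAdmissible_iff.1 hsa
    have hle := (hmc.quot π).edgeCount_le_vertCount hadm
    have hec : (Γ.quot π).edgeCount = Nat.card V := by
      exact_mod_cast (hlen (hclosed.quot π)).trans hd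
    rw [vertCount_quot_of_verts_eq_univ hverts, hec] at hle
    exact Setoid.eq_bot_of_card_le hle
  · rintro rfl
    have hadm : Γ.Admissible := by
      refine ⟨fun r' a b b' hab hab' => σ.injective ?_, fun r' a a' b hab ha'b => ?_⟩
      · exact ((hE _ _ _).1 hab).2.symm.trans ((hE _ _ _).1 hab').2
      · exact ((hE _ _ _).1 hab).2.trans ((hE _ _ _).1 ha'b).2.symm
    have hec : Γ.edgeCount = Nat.card V := Nat.card_congr
      { toFun := fun p => p.1.2.2
        invFun := fun b => ⟨(r, σ b, b), (hE _ _ _).2 ⟨rfl, rfl⟩⟩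
        left_inv := by
          rintro ⟨⟨r', a, b⟩, hab⟩
          obtain ⟨rfl, rfl⟩ : r' = r ∧ a = σ b := (hE _ _ _).1 hab
          rfl
        right_inv := fun _ => rfl }
    have hvc : Γ.vertCount = Nat.card V := by rw [vertCount, hverts, Nat.card_univ]
    rw [IsChiOneStrongCongruence, hmc.isStrongCongruence_bot_iff, hmc.chi_quot_bot,
      hmc.stronglyAdmissible_iff, hmc.chi_eq, hec, hvc, if_pos hclosed]
    exact ⟨⟨hadm, fun _ => hd.symm, fun h => absurd hclosed h⟩, by ring⟩

section SingleEdge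

variable {v₀ v₁ : V}

lemma isMonoConnected_of_single_edge (hconn : Γ.Connected)
    (hE : ∀ r' a b, Γ.E r' a b ↔ r' = r ∧ a = v₁ ∧ b = v₀) : Γ.IsMonoConnected r :=
  ⟨fun r' a b hab => ((hE r' a b).1 hab).1, hconn, ⟨v₁, v₀, (hE _ _ _).2 ⟨rfl, rfl, rfl⟩⟩⟩

lemma isChiOneStrongCongruence_bot_iff_of_single_edge (hverts : Γ.verts = Set.univ)
    (hconn : Γ.Connected) (hv : v₀ ≠ v₁) (hall : ∀ c, c = v₀ ∨ c = v₁)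
    (hE : ∀ r' a b, Γ.E r' a b ↔ r' = r ∧ a = v₁ ∧ b = v₀) :
    Γ.IsChiOneStrongCongruence d ⊥ ↔ 1 < d r := by
  have hmc := isMonoConnected_of_single_edge hconn hE
  have hvc : Γ.vertCount = 2 := by
    rw [vertCount, hverts, Nat.card_univ, Nat.card_eq_two_iff]
    exact ⟨v₀, v₁, hv, Set.eq_univ_of_forall hall⟩
  have hnc : ¬Γ.Closed := fun h => by
    obtain ⟨r', b, hb⟩ := h v₀ (hverts ▸ Set.mem_univ _)
    exact hv ((hE _ _ _).1 hb).2.1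
  have hadm : Γ.Admissible :=
    ⟨fun _ _ _ _ hab hab' => ((hE _ _ _).1 hab).2.2.trans ((hE _ _ _).1 hab').2.2.symm,
      fun _ _ _ _ hab hab' => ((hE _ _ _).1 hab).2.1.trans ((hE _ _ _).1 hab').2.1.symm⟩
  rw [IsChiOneStrongCongruence, hmc.isStrongCongruence_bot_iff, hmc.chi_quot_bot,
    hmc.stronglyAdmissible_iff, hmc.chi_eq, edgeCount_eq_one hE, hvc, if_neg hnc]
  simp [hadm, hnc]

lemma isChiOneStrongCongruence_top_iff_of_single_edge (hconn : Γ.Connected)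
    (hE : ∀ r' a b, Γ.E r' a b ↔ r' = r ∧ a = v₁ ∧ b = v₀) :
    Γ.IsChiOneStrongCongruence d ⊤ ↔ d r = 1 := by
  have hmc := (isMonoConnected_of_single_edge hconn hE).quot ⊤
  have hE' : ∀ r' (A B : Quotient (⊤ : Setoid V)), (Γ.quot ⊤).E r' A B ↔
      r' = r ∧ A = ⟦v₁⟧ ∧ B = ⟦v₀⟧ := fun r' A B => by
    simp [quot_top_E, hE, Subsingleton.elim A ⟦v₁⟧, Subsingleton.elim B ⟦v₀⟧]
  have hcl : (Γ.quot ⊤).Closed := fun A _ =>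
    ⟨r, A, (hE' _ _ _).2 ⟨rfl, Subsingleton.elim _ _, Subsingleton.elim _ _⟩⟩
  rw [IsChiOneStrongCongruence, IsStrongCongruence, hmc.stronglyAdmissible_iff, hmc.chi_eq,
    edgeCount_eq_one hE', vertCount_quot_top, if_pos hcl]
  simp [isCongruence_top, admissible_quot_top, hcl, eq_comm]

theorem sconCount_eq_one_of_single_edge (hverts : Γ.verts = Set.univ) (hconn : Γ.Connected)
    (hv : v₀ ≠ v₁) (hall : ∀ c, c = v₀ ∨ c = v₁)
    (hE : ∀ r' a b, Γ.E r' a b ↔ r' = r ∧ a = v₁ ∧ b = v₀) (hd : 1 ≤ d r) :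
    sconCount d Γ = 1 := by
  have hbot := isChiOneStrongCongruence_bot_iff_of_single_edge (d := d) hverts hconn hv hall hE
  have htop := isChiOneStrongCongruence_top_iff_of_single_edge (d := d) hconn hE
  have hπ := Setoid.eq_bot_or_eq_top_of_forall_eq_or_eq hall
  obtain hlt | heq := hd.lt_or_eq
  · refine sconCount_eq_one_of_forall_iff ⊥ fun π => ⟨fun h => (hπ π).resolve_right ?_, ?_⟩
    · rintro rfl
      exact hlt.ne' (htop.1 h)
    · rintro rfl
      exact hbot.2 hlt
  · refine sconCount_eq_one_of_forall_iff ⊤ fun π => ⟨fun h => (hπ π).resolve_left ?_, ?_⟩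
    · rintro rfl
      exact (hbot.1 h).ne heq
    · rintro rfl
      exact htop.2 heq.symm

end SingleEdge

end CGraph

lemma nxt_eq_add_one {n : ℕ} [NeZero n] (k : Fin n) : nxt k = k + 1 := by
  ext
  simp [nxt, Fin.val_add]

section WordGraph

open CGraph

variable {s : ℕ} {d : Fin s → ℕ∞}

open Fin.NatCast in
lemma wordGraph_connected (x : List (Fin s × Bool)) (hx : x ≠ []) :
    (wordGraph x hx).Connected := by
  have : NeZero x.length := ⟨List.length_pos_iff.2 hx |>.ne'⟩
  have hadj (k : Fin x.length) : (wordGraph x hx).Adj k (k + 1) := by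
    rw [← nxt_eq_add_one]
    rcases h : x.get k with ⟨r, _ | _⟩
    exacts [⟨r, .inl ⟨k, .inr ⟨h, rfl, rfl⟩⟩⟩, ⟨r, .inr ⟨k, .inl ⟨h, rfl, rfl⟩⟩⟩]
  have hreach (a : Fin x.length) (j : ℕ) :
      Relation.ReflTransGen (wordGraph x hx).Adj a (a + (j : Fin x.length)) := by
    induction j with
    | zero => simpa using .refl
    | succ j ih => simpa [add_assoc] using ih.tail (hadj _)
  intro a _ b _
  simpa using hreach a (b - a).val

lemma wordGraph_replicate_E {m : ℕ} {r r' : Fin s} {b : Bool}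
    (hx : List.replicate m (r, b) ≠ []) {u v : Fin (List.replicate m (r, b)).length} :
    (wordGraph _ hx).E r' u v ↔ r' = r ∧ if b then u = nxt v else v = nxt u := by
  cases b <;> simp [wordGraph, eq_comm]

theorem sconCount_wordGraph_replicate {m : ℕ} {r : Fin s} (b : Bool)
    (hx : List.replicate m (r, b) ≠ []) (hd : d r = m) :
    sconCount d (wordGraph _ hx) = 1 := by
  have : NeZero (List.replicate m (r, b)).length := ⟨by simpa using hx⟩
  refine sconCount_eq_one_of_cycle rfl (wordGraph_connected _ hx)
    (if b then Equiv.addRight 1 else (Equiv.addRight 1).symm) (fun r' u v => ?_) (by simpa using hd)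
  rw [wordGraph_replicate_E]
  cases b <;> simp [nxt_eq_add_one, eq_add_neg_iff_add_eq, eq_comm]

theorem sconCount_wordGraph_pair {r : Fin s} (b : Bool) (hx : [(r, b), (r, !b)] ≠ [])
    (hd : 1 ≤ d r) : sconCount d (wordGraph _ hx) = 1 := by
  cases b
  · refine sconCount_eq_one_of_single_edge (v₀ := 1) (v₁ := 0) rfl (wordGraph_connected _ hx)
      Fin.zero_lt_one.ne' (Fin.forall_fin_two.2 ⟨.inr rfl, .inl rfl⟩) (fun r' u v => ?_) hd
    simp [wordGraph, Fin.exists_fin_two, nxt, eq_comm]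
  · refine sconCount_eq_one_of_single_edge (v₀ := 0) (v₁ := 1) rfl (wordGraph_connected _ hx)
      Fin.zero_lt_one.ne (Fin.forall_fin_two.2 ⟨.inl rfl, .inr rfl⟩) (fun r' u v => ?_) hd
    simp [wordGraph, Fin.exists_fin_two, nxt, eq_comm]

end WordGraph

theorem sconCount_special_word_general (s : ℕ) (d : Fin s → ℕ∞)
    (hd : ∀ r, 1 ≤ d r) (x : List (Fin s × Bool)) (hx : x ≠ [])
    (hxs : IsSpecialWord s d x) :
    sconCount d (wordGraph x hx) = 1 := by
  obtain ⟨r, rfl | rfl | ⟨m, hm, rfl | rfl⟩⟩ := hxs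
  · exact sconCount_wordGraph_pair true hx (hd r)
  · exact sconCount_wordGraph_pair false hx (hd r)
  · exact sconCount_wordGraph_replicate true hx hm
  · exact sconCount_wordGraph_replicate false hx hm

/-- If `x` is one of the words `g_r g_r^*`, `g_r^* g_r`, `g_r^{d_r}`, `(g_r^*)^{d_r}`,
then the word-graph `Γ_x` has exactly one strong congruence `π` with `χ(Γ_x/π) = 1`. -/
theorem sconCount_special_word (s : ℕ) (hs : 0 < s) (d : Fin s → ℕ∞)
    (hd : ∀ r, 1 ≤ d r) (x : List (Fin s × Bool)) (hx : x ≠ [])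
    (hxs : IsSpecialWord s d x) :
    sconCount d (wordGraph x hx) = 1 :=
  sconCount_special_word_general s d hd x hx hxs
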